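/- arXiv:2504.09547 — 3 statements merged into one kernel-verified Lean document; each statement's English description precedes it below -/
import Mathlib

section
/- Let X be a complex Hilbert space and A : X → X a bounded linear operator. Then A is coercive (i.e. inf over nonzero u of |⟨Au,u⟩|/‖u‖² > 0) if and only if there exists ξ ∈ ℂ with |ξ| = 1 such that inf over nonzero u of Re(ξ⟨Au,u⟩)/‖u‖² > 0. -/
open scoped InnerProductSpace

section Aux
open Complex

variable {X : Type*} [NormedAddCommGroup X] [InnerProductSpace ℂ X]

lemma inner_expand (B : X →L[ℂ] X) (x y : X) (α β : ℂ) :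
    ⟪B (α • x + β • y), α • x + β • y⟫_ℂ =
      starRingEnd ℂ α * α * ⟪B x, x⟫_ℂ + starRingEnd ℂ α * β * ⟪B x, y⟫_ℂ +
      starRingEnd ℂ β * α * ⟪B y, x⟫_ℂ + starRingEnd ℂ β * β * ⟪B y, y⟫_ℂ := by
  simp [map_add, map_smul, inner_add_left, inner_add_right, inner_smul_left, inner_smul_right]
  ring

/-- Core Toeplitz–Hausdorff step. -/
lemma th_core (B : X →L[ℂ] X) (u v : X) (hu : ‖u‖ = 1) (hv : ‖v‖ = 1)
    (h0 : ⟪B u, u⟫_ℂ = 0) (h1 : ⟪B v, v⟫_ℂ = 1) (s : ℝ) (hs : s ∈ Set.Icc (0:ℝ) 1) :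
    ∃ w : X, ‖w‖ = 1 ∧ ⟪B w, w⟫_ℂ = (s : ℂ) := by
  set a := ⟪B u, v⟫_ℂ with ha
  set b := ⟪B v, u⟫_ℂ with hb
  set m := a - starRingEnd ℂ b with hm
  set l : ℂ := if m = 0 then 1 else starRingEnd ℂ m / (‖m‖ : ℂ) with hl
  have hlnorm : ‖l‖ = 1 := by
    rw [hl]
    split_ifs with h
    · simp
    · rw [norm_div]
      simp only [RCLike.norm_conj, Complex.norm_real, norm_norm]
      exact div_self (norm_ne_zero_iff.mpr h)
  have hlm : (l * m).im = 0 := by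
    rw [hl]
    split_ifs with h
    · simp [h]
    · rw [div_mul_eq_mul_div, Complex.div_im]
      have : starRingEnd ℂ m * m = (Complex.normSq m : ℂ) := by
        rw [mul_comm]; exact Complex.mul_conj m
      simp [this]
  have him : (l * a + starRingEnd ℂ l * b).im = 0 := by
    have key : (starRingEnd ℂ l * b).im = -((l * starRingEnd ℂ b).im) := by
      have e : starRingEnd ℂ (l * starRingEnd ℂ b) = starRingEnd ℂ l * b := by
        rw [map_mul]; simp
      rw [← e, Complex.conj_im]
    have h2 : (l * a).im - (l * starRingEnd ℂ b).im = 0 := by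
      have e : l * m = l * a - l * starRingEnd ℂ b := by rw [hm]; ring
      rw [e, Complex.sub_im] at hlm; exact hlm
    rw [Complex.add_im, key]; linarith
  set r : ℝ := (l * a + starRingEnd ℂ l * b).re with hr
  have hlab : l * a + starRingEnd ℂ l * b = (r : ℂ) := by
    apply Complex.ext
    · simp [hr]
    · simp [him]
  have hll : starRingEnd ℂ l * l = 1 := by
    rw [mul_comm, Complex.mul_conj]
    norm_cast
    rw [Complex.normSq_eq_norm_sq, hlnorm]; norm_num
  set w : ℝ → X := fun t => ((1 - t : ℝ) : ℂ) • u + (((t : ℝ) : ℂ) * l) • v with hw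
  have hunz : u ≠ 0 := fun h => by rw [h] at hu; simp at hu
  have hwne : ∀ t : ℝ, w t ≠ 0 := by
    intro t h
    rcases eq_or_ne t 0 with rfl | htz
    · simp only [hw] at h
      norm_num at h
      exact hunz h
    · have hcoef : ((t : ℂ) * l) ≠ 0 := by
        apply mul_ne_zero
        · exact_mod_cast htz
        · intro h'; rw [h'] at hlnorm; simp at hlnorm
      have h' : ((1 - t : ℝ) : ℂ) • u + (((t : ℝ) : ℂ) * l) • v = 0 := h
      have hstep : ((t:ℂ) * l) • v = (-((1 - t : ℝ) : ℂ)) • u := by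
        rw [eq_neg_of_add_eq_zero_right h', neg_smul]
      set μ := (((t:ℂ) * l)⁻¹ * (-((1 - t : ℝ) : ℂ))) with hμ
      have hveq : v = μ • u := by
        calc v = (((t:ℂ) * l)⁻¹ * ((t:ℂ) * l)) • v := by
                  rw [inv_mul_cancel₀ hcoef, one_smul]
          _ = μ • u := by rw [mul_smul, hstep, hμ, mul_smul]
      have : ⟪B v, v⟫_ℂ = starRingEnd ℂ μ * μ * ⟪B u, u⟫_ℂ := by
        rw [hveq, map_smul, inner_smul_left, inner_smul_right]; ring
      rw [h0, h1] at this
      simp at this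
  have hinner : ∀ t : ℝ, ⟪B (w t), w t⟫_ℂ = (((1-t)*t*r + t^2 : ℝ) : ℂ) := by
    intro t
    simp only [hw]
    rw [inner_expand B u v ((1 - t : ℝ) : ℂ) (((t:ℝ):ℂ) * l), h0, h1, ← ha, ← hb]
    simp only [Complex.conj_ofReal, map_mul]
    push_cast
    linear_combination ((1:ℂ)-(t:ℂ))*(t:ℂ)*hlab + (t:ℂ)^2*hll
  -- the real function for IVT
  set F : ℝ → ℝ := fun t => ((1-t)*t*r + t^2) / ‖w t‖^2 with hF
  have hwcont : Continuous w := by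
    have c1 : Continuous fun t : ℝ => ((1 - t : ℝ) : ℂ) :=
      Complex.continuous_ofReal.comp (continuous_const.sub continuous_id)
    have c2 : Continuous fun t : ℝ => ((t : ℝ) : ℂ) * l :=
      Complex.continuous_ofReal.mul continuous_const
    exact (c1.smul continuous_const).add (c2.smul continuous_const)
  have hFcont : Continuous F := by
    apply Continuous.div
    · exact (((continuous_const.sub continuous_id).mul continuous_id).mul
        continuous_const).add (continuous_pow 2)
    · exact (hwcont.norm.pow 2)
    · intro t
      exact pow_ne_zero 2 (norm_ne_zero_iff.mpr (hwne t))
  have hF0 : F 0 = 0 := by simp [hF]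
  have hF1 : F 1 = 1 := by
    have : w 1 = l • v := by simp [hw]
    simp [hF, this, norm_smul, hlnorm, hv]
  have hivt : s ∈ F '' Set.Icc (0:ℝ) 1 := by
    have := intermediate_value_Icc (by norm_num : (0:ℝ) ≤ 1) hFcont.continuousOn
    rw [hF0, hF1] at this
    exact this hs
  obtain ⟨t, _, hts⟩ := hivt
  refine ⟨((‖w t‖⁻¹ : ℝ) : ℂ) • w t, ?_, ?_⟩
  · rw [norm_smul]
    simp [norm_ne_zero_iff.mpr (hwne t)]
  · rw [map_smul, inner_smul_left, inner_smul_right, hinner t, Complex.conj_ofReal, ← hts]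
    simp only [hF]
    have hN : ‖w t‖ ≠ 0 := norm_ne_zero_iff.mpr (hwne t)
    have e : ((1 - t) * t * r + t ^ 2) / ‖w t‖ ^ 2
        = ‖w t‖⁻¹ * (‖w t‖⁻¹ * ((1-t)*t*r + t^2)) := by
      rw [pow_two]; field_simp
    rw [e]; push_cast; ring


/-- Toeplitz–Hausdorff: the numerical range is convex. -/
lemma numRange_convex (A : X →L[ℂ] X) :
    Convex ℝ {z : ℂ | ∃ u : X, ‖u‖ = 1 ∧ ⟪A u, u⟫_ℂ = z} := by
  rintro z1 ⟨u, hu, hz1⟩ z2 ⟨v, hv, hz2⟩ p q hp hq hpq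
  by_cases hz : z1 = z2
  · refine ⟨v, hv, ?_⟩
    rw [hz2]
    rw [hz] at *
    have : p • z2 + q • z2 = ((p + q : ℝ) : ℂ) * z2 := by
      push_cast
      rw [Complex.real_smul, Complex.real_smul]
      ring
    rw [this, hpq]
    simp
  · have hd : (z2 - z1) ≠ 0 := sub_ne_zero.mpr (Ne.symm hz)
    set B : X →L[ℂ] X := (starRingEnd ℂ (z2 - z1))⁻¹ •
      (A - (starRingEnd ℂ z1) • ContinuousLinearMap.id ℂ X) with hB
    have hBw : ∀ w : X, ⟪B w, w⟫_ℂ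
        = (z2 - z1)⁻¹ * (⟪A w, w⟫_ℂ - z1 * ((‖w‖ : ℂ))^2) := by
      intro w
      have : B w = (starRingEnd ℂ (z2 - z1))⁻¹ • (A w - (starRingEnd ℂ z1) • w) := by
        simp [hB]
      rw [this, inner_smul_left, inner_sub_left, inner_smul_left]
      rw [inner_self_eq_norm_sq_to_K]
      simp [map_inv₀]
    have hBu : ⟪B u, u⟫_ℂ = 0 := by
      rw [hBw, hz1, hu]; simp
    have hBv : ⟪B v, v⟫_ℂ = 1 := by
      rw [hBw, hz2, hv]
      simp
      exact inv_mul_cancel₀ hd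
    obtain ⟨w, hw1, hw2⟩ := th_core B u v hu hv hBu hBv q ⟨hq, by linarith⟩
    refine ⟨w, hw1, ?_⟩
    rw [hBw, hw1] at hw2
    have : ⟪A w, w⟫_ℂ - z1 = (z2 - z1) * (q : ℂ) := by
      field_simp at hw2
      push_cast at hw2
      linear_combination hw2
    have hpq' : (p : ℂ) + (q : ℂ) = 1 := by exact_mod_cast hpq
    rw [Complex.real_smul, Complex.real_smul]
    linear_combination this - z1 * hpq'

end Aux

section Main
open Complex

/-- A bounded operator on a complex Hilbert space is coercive
(`|⟨Au,u⟩| ≥ c‖u‖²` for some `c > 0`) iff there exists `ξ ∈ ℂ` with `|ξ| = 1` such that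
`Re(ξ⟨Au,u⟩) ≥ c‖u‖²` for some `c > 0`. -/

theorem coercive_iff_exists_rotation {X : Type*} [NormedAddCommGroup X]
    [InnerProductSpace ℂ X] [CompleteSpace X] (A : X →L[ℂ] X) :
    (∃ c : ℝ, 0 < c ∧ ∀ u : X, c * ‖u‖ ^ 2 ≤ ‖⟪A u, u⟫_ℂ‖) ↔
      (∃ ξ : ℂ, ‖ξ‖ = 1 ∧ ∃ c : ℝ, 0 < c ∧ ∀ u : X, c * ‖u‖ ^ 2 ≤ (ξ * ⟪A u, u⟫_ℂ).re) := by
  constructor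
  · rintro ⟨c, hc, h⟩
    by_cases hX : ∀ u : X, u = 0
    · refine ⟨1, by simp, 1, one_pos, fun u => ?_⟩
      rw [hX u]; simp
    · push_neg at hX
      obtain ⟨u₀, hu₀⟩ := hX
      set W : Set ℂ := {z : ℂ | ∃ u : X, ‖u‖ = 1 ∧ ⟪A u, u⟫_ℂ = z} with hW
      have hWne : W.Nonempty := by
        refine ⟨⟪A (((‖u₀‖⁻¹ : ℝ) : ℂ) • u₀), ((‖u₀‖⁻¹ : ℝ) : ℂ) • u₀⟫_ℂ,
          ((‖u₀‖⁻¹ : ℝ) : ℂ) • u₀, ?_, rfl⟩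
        rw [norm_smul]
        simp [norm_ne_zero_iff.mpr hu₀]
      have hdisj : Disjoint (Metric.ball (0:ℂ) c) W := by
        rw [Set.disjoint_right]
        rintro z ⟨u, hu, hz⟩ hzball
        have := h u
        rw [hu, hz] at this
        simp only [one_pow, mul_one] at this
        rw [Metric.mem_ball, dist_zero_right] at hzball
        linarith
      obtain ⟨f, α, hfb, hfW⟩ := geometric_hahn_banach_open
        (convex_ball (0:ℂ) c) Metric.isOpen_ball (numRange_convex A) hdisj
      have hα : 0 < α := by
        have := hfb 0 (Metric.mem_ball_self hc)
        simpa using this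
      set η : ℂ := ((f 1 : ℝ) : ℂ) - ((f I : ℝ) : ℂ) * I with hη
      have hf : ∀ z : ℂ, f z = (η * z).re := by
        intro z
        have hz : z = (z.re : ℝ) • (1:ℂ) + (z.im : ℝ) • (I:ℂ) := by
          apply Complex.ext <;> simp
        calc f z = f ((z.re : ℝ) • (1:ℂ) + (z.im : ℝ) • I) := by rw [← hz]
          _ = z.re * f 1 + z.im * f I := by
              rw [map_add, map_smul, map_smul]; simp [smul_eq_mul]
          _ = (η * z).re := by
              simp [hη, Complex.mul_re, Complex.sub_re, Complex.sub_im, Complex.mul_im]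
              ring
      have hηne : η ≠ 0 := by
        intro h0
        obtain ⟨z, hzW⟩ := hWne
        have := hfW z hzW
        rw [hf z, h0] at this
        simp at this
        linarith
      have hnη : 0 < ‖η‖ := norm_pos_iff.mpr hηne
      refine ⟨((‖η‖⁻¹ : ℝ) : ℂ) * η, ?_, α / ‖η‖, div_pos hα hnη, ?_⟩
      · rw [norm_mul, Complex.norm_real, Real.norm_eq_abs, abs_inv, abs_norm]
        exact inv_mul_cancel₀ (ne_of_gt hnη)
      · intro u
        rcases eq_or_ne u 0 with rfl | hune
        · simp
        · have hnu : 0 < ‖u‖ := norm_pos_iff.mpr hune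
          set u' : X := ((‖u‖⁻¹ : ℝ) : ℂ) • u with hu'
          have hu'1 : ‖u'‖ = 1 := by
            rw [hu', norm_smul]
            simp [ne_of_gt hnu]
          set z : ℂ := ⟪A u', u'⟫_ℂ with hz
          have hzW : z ∈ W := ⟨u', hu'1, rfl⟩
          have hfz : α ≤ (η * z).re := by rw [← hf z]; exact hfW z hzW
          have hAu : ⟪A u, u⟫_ℂ = ((‖u‖^2 : ℝ) : ℂ) * z := by
            rw [hz, hu', map_smul, inner_smul_left, inner_smul_right, Complex.conj_ofReal]
            push_cast
            have : (‖u‖ : ℂ) ≠ 0 := by exact_mod_cast ne_of_gt hnu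
            field_simp
          rw [hAu]
          have e1 : (((‖η‖⁻¹ : ℝ) : ℂ) * η * (((‖u‖^2 : ℝ) : ℂ) * z)).re
              = ‖η‖⁻¹ * (‖u‖^2 * (η * z).re) := by
            have : ((‖η‖⁻¹ : ℝ) : ℂ) * η * (((‖u‖^2 : ℝ) : ℂ) * z)
                = ((‖η‖⁻¹ : ℝ) : ℂ) * (((‖u‖^2 : ℝ) : ℂ) * (η * z)) := by ring
            rw [this, Complex.re_ofReal_mul, Complex.re_ofReal_mul]
          rw [e1]
          rw [div_eq_mul_inv]
          have h2 : α * ‖u‖^2 ≤ (η * z).re * ‖u‖^2 := by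
            apply mul_le_mul_of_nonneg_right hfz (by positivity)
          calc α * ‖η‖⁻¹ * ‖u‖^2 = ‖η‖⁻¹ * (α * ‖u‖^2) := by ring
            _ ≤ ‖η‖⁻¹ * ((η*z).re * ‖u‖^2) := by
                apply mul_le_mul_of_nonneg_left h2 (by positivity)
            _ = ‖η‖⁻¹ * (‖u‖^2 * (η*z).re) := by ring
  · rintro ⟨ξ, hξ, c, hc, h⟩
    refine ⟨c, hc, fun u => ?_⟩
    calc c * ‖u‖^2 ≤ (ξ * ⟪A u, u⟫_ℂ).re := h u
      _ ≤ ‖ξ * ⟪A u, u⟫_ℂ‖ := Complex.re_le_norm _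
      _ = ‖⟪A u, u⟫_ℂ‖ := by rw [norm_mul, hξ, one_mul]

end Main
end

section
/- Let (Xₙ,pₙ,Aₙ) be a discrete approximation scheme of (X,A). Suppose there are C > 0, operators Tₙ, Bₙ, Kₙ ∈ L(Xₙ) and B, T ∈ L(X) such that ‖Tₙ‖, ‖Tₙ⁻¹‖, ‖Bₙ‖, ‖Bₙ⁻¹‖ ≤ C for all n, B is bijective, (Kₙ) is a compact sequence of operators, limₙ ‖Tₙpₙu − pₙTu‖ = 0 and limₙ ‖Bₙpₙu − pₙBu‖ = 0 for all u ∈ X, and AₙTₙ = Bₙ + Kₙ. Then the sequence (Aₙ) is regular. -/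
open scoped InnerProductSpace
open Filter Topology

variable {X : Type*} [NormedAddCommGroup X] [InnerProductSpace ℂ X] [CompleteSpace X]
variable {Xn : ℕ → Type*} [∀ n, NormedAddCommGroup (Xn n)] [∀ n, InnerProductSpace ℂ (Xn n)]

/-- A sequence `uₙ ∈ Xₙ` is compact if every subsequence has a subsubsequence converging
(in the sense `‖pₙu − uₙ‖ → 0`) to some element of `X`. -/
def CompactSeq (p : ∀ n, X →L[ℂ] Xn n) (u : ∀ n, Xn n) : Prop :=
  ∀ φ : ℕ → ℕ, StrictMono φ → ∃ ψ : ℕ → ℕ, StrictMono ψ ∧ ∃ x : X,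
    Tendsto (fun k => ‖p (φ (ψ k)) x - u (φ (ψ k))‖) atTop (𝓝 0)

/-- The sequence of operators `Aₙ` approximates `A`: `‖Aₙpₙu − pₙAu‖ → 0` for all `u ∈ X`. -/
def ApproxOp (p : ∀ n, X →L[ℂ] Xn n) (A : X →L[ℂ] X) (An : ∀ n, Xn n →L[ℂ] Xn n) : Prop :=
  ∀ x : X, Tendsto (fun n => ‖An n (p n x) - p n (A x)‖) atTop (𝓝 0)

/-- The sequence `Kₙ` is a compact sequence of operators: it maps bounded sequences to
compact sequences. -/
def CompactOpSeq (p : ∀ n, X →L[ℂ] Xn n) (Kn : ∀ n, Xn n →L[ℂ] Xn n) : Prop :=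
  ∀ (u : ∀ n, Xn n) (C : ℝ), (∀ n, ‖u n‖ ≤ C) → CompactSeq p (fun n => Kn n (u n))

/-- The sequence `Aₙ` is regular: bounded sequences `uₙ` with `(Aₙuₙ)` compact are
themselves compact. -/
def RegularOpSeq (p : ∀ n, X →L[ℂ] Xn n) (An : ∀ n, Xn n →L[ℂ] Xn n) : Prop :=
  ∀ (u : ∀ n, Xn n) (C : ℝ), (∀ n, ‖u n‖ ≤ C) →
    CompactSeq p (fun n => An n (u n)) → CompactSeq p u

/-- Weak T-compatibility criterion: if `AₙTₙ = Bₙ + Kₙ` with `Tₙ, Bₙ` invertible with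
uniformly bounded norms and inverses, `B` bijective, `(Kₙ)` a compact operator sequence,
and `Tₙ → T`, `Bₙ → B` in the sense of discrete approximation, then `(Aₙ)` is regular. -/
theorem weak_T_compatibility_regular [∀ n, FiniteDimensional ℂ (Xn n)]
    (p : ∀ n, X →L[ℂ] Xn n)
    (hp : ∀ x : X, Tendsto (fun n => ‖p n x‖) atTop (𝓝 ‖x‖))
    (A : X →L[ℂ] X) (An : ∀ n, Xn n →L[ℂ] Xn n)
    (happrox : ApproxOp p A An)
    (C : ℝ) (hC : 0 < C)
    (Tn Bn Kn Tninv Bninv : ∀ n, Xn n →L[ℂ] Xn n)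
    (hTninv : ∀ n, (∀ x, Tninv n (Tn n x) = x) ∧ (∀ x, Tn n (Tninv n x) = x))
    (hBninv : ∀ n, (∀ x, Bninv n (Bn n x) = x) ∧ (∀ x, Bn n (Bninv n x) = x))
    (hTb : ∀ n, ‖Tn n‖ ≤ C) (hTib : ∀ n, ‖Tninv n‖ ≤ C)
    (hBb : ∀ n, ‖Bn n‖ ≤ C) (hBib : ∀ n, ‖Bninv n‖ ≤ C)
    (B T : X →L[ℂ] X) (hB : Function.Bijective B)
    (hKn : CompactOpSeq p Kn)
    (hTapprox : ApproxOp p T Tn) (hBapprox : ApproxOp p B Bn)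
    (hfact : ∀ n, (An n).comp (Tn n) = Bn n + Kn n) :
    RegularOpSeq p An := by
  intro u C' hu hAu
  set v : ∀ n, Xn n := fun n => Tninv n (u n) with hvdef
  have hvb : ∀ n, ‖v n‖ ≤ C * C' := by
    intro n
    calc ‖v n‖ ≤ ‖Tninv n‖ * ‖u n‖ := (Tninv n).le_opNorm _
      _ ≤ C * C' := mul_le_mul (hTib n) (hu n) (norm_nonneg _) hC.le
  have hTv : ∀ n, Tn n (v n) = u n := fun n => (hTninv n).2 _
  have hAeq : ∀ n, An n (u n) = Bn n (v n) + Kn n (v n) := by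
    intro n
    have h2 := ContinuousLinearMap.ext_iff.mp (hfact n) (v n)
    simpa [hTv n] using h2
  intro φ hφ
  obtain ⟨ψ₁, hψ₁, x₁, hx₁⟩ := hAu φ hφ
  obtain ⟨ψ₂, hψ₂, y, hy⟩ := hKn v (C * C') hvb (φ ∘ ψ₁) (hφ.comp hψ₁)
  refine ⟨ψ₁ ∘ ψ₂, hψ₁.comp hψ₂, ?_⟩
  set m : ℕ → ℕ := fun k => φ (ψ₁ (ψ₂ k)) with hmdef
  have hmSM : StrictMono m := hφ.comp (hψ₁.comp hψ₂)
  -- Aₙuₙ → x₁ along m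
  have hA' : Tendsto (fun k => ‖p (m k) x₁ - An (m k) (u (m k))‖) atTop (𝓝 0) :=
    hx₁.comp hψ₂.tendsto_atTop
  -- Kₙvₙ → y along m
  have hK' : Tendsto (fun k => ‖p (m k) y - Kn (m k) (v (m k))‖) atTop (𝓝 0) := hy
  -- Bₙvₙ → x₁ - y along m
  have hBv : Tendsto (fun k => ‖p (m k) (x₁ - y) - Bn (m k) (v (m k))‖) atTop (𝓝 0) := by
    have hsum := hA'.add hK'
    rw [add_zero] at hsum
    refine squeeze_zero (fun k => norm_nonneg _) (fun k => ?_) hsum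
    have heq : p (m k) (x₁ - y) - Bn (m k) (v (m k)) =
        (p (m k) x₁ - An (m k) (u (m k))) - (p (m k) y - Kn (m k) (v (m k))) := by
      rw [hAeq (m k)]; simp [map_sub]; abel
    rw [heq]
    exact norm_sub_le _ _
  obtain ⟨z, hz⟩ := hB.2 (x₁ - y)
  -- vₙ → z along m
  have hvz : Tendsto (fun k => ‖p (m k) z - v (m k)‖) atTop (𝓝 0) := by
    have hB1 : Tendsto (fun k => ‖Bn (m k) (p (m k) z) - p (m k) (B z)‖) atTop (𝓝 0) :=
      (hBapprox z).comp hmSM.tendsto_atTop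
    have hsum := (hB1.add hBv).const_mul C
    rw [add_zero, mul_zero] at hsum
    refine squeeze_zero (fun k => norm_nonneg _) (fun k => ?_) hsum
    have h1 : p (m k) z - v (m k) = Bninv (m k) (Bn (m k) (p (m k) z - v (m k))) :=
      ((hBninv (m k)).1 _).symm
    calc ‖p (m k) z - v (m k)‖
        = ‖Bninv (m k) (Bn (m k) (p (m k) z - v (m k)))‖ := by rw [← h1]
      _ ≤ ‖Bninv (m k)‖ * ‖Bn (m k) (p (m k) z - v (m k))‖ := (Bninv (m k)).le_opNorm _
      _ ≤ C * ‖Bn (m k) (p (m k) z - v (m k))‖ :=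
          mul_le_mul_of_nonneg_right (hBib _) (norm_nonneg _)
      _ ≤ C * (‖Bn (m k) (p (m k) z) - p (m k) (B z)‖ +
            ‖p (m k) (x₁ - y) - Bn (m k) (v (m k))‖) := by
          refine mul_le_mul_of_nonneg_left ?_ hC.le
          have heq : Bn (m k) (p (m k) z - v (m k)) =
              (Bn (m k) (p (m k) z) - p (m k) (B z)) +
              (p (m k) (x₁ - y) - Bn (m k) (v (m k))) := by
            rw [hz]; simp [map_sub]
          rw [heq]
          exact norm_add_le _ _
  -- uₙ → T z along m
  refine ⟨T z, ?_⟩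
  have hT1 : Tendsto (fun k => ‖Tn (m k) (p (m k) z) - p (m k) (T z)‖) atTop (𝓝 0) :=
    (hTapprox z).comp hmSM.tendsto_atTop
  have hsum := hT1.add (hvz.const_mul C)
  rw [mul_zero, add_zero] at hsum
  refine squeeze_zero (fun k => norm_nonneg _) (fun k => ?_) hsum
  have heq : p (m k) (T z) - u (m k) =
      -(Tn (m k) (p (m k) z) - p (m k) (T z)) + Tn (m k) (p (m k) z - v (m k)) := by
    rw [← hTv (m k)]; simp [map_sub]
  calc ‖p (m k) (T z) - u (m k)‖
      ≤ ‖Tn (m k) (p (m k) z) - p (m k) (T z)‖ + ‖Tn (m k) (p (m k) z - v (m k))‖ := by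
        rw [heq]; exact (norm_add_le _ _).trans (by rw [norm_neg])
    _ ≤ ‖Tn (m k) (p (m k) z) - p (m k) (T z)‖ + C * ‖p (m k) z - v (m k)‖ := by
        gcongr
        exact ((Tn (m k)).le_opNorm _).trans
          (mul_le_mul_of_nonneg_right (hTb _) (norm_nonneg _))
end

section
/- Let Ω ⊂ ℝ^d (d = 2 or 3) be a bounded convex domain with Lipschitz boundary and v ∈ H¹(Ω)^d with v·ν = 0 on ∂Ω (ν the outer unit normal). Then ‖div v‖²_{L²(Ω)} ≥ Σ_{i,j=1}^d ⟨∂_{x_j}v_i, ∂_{x_i}v_j⟩_{L²(Ω)}. -/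
open scoped InnerProductSpace NNReal
open MeasureTheory

theorem coord_abs_le_norm {d : ℕ} (x : EuclideanSpace ℝ (Fin d)) (i : Fin d) : |x i| ≤ ‖x‖ := by
  rw [EuclideanSpace.norm_eq]
  have h : |x i| = Real.sqrt (‖x i‖^2) := by rw [Real.sqrt_sq_eq_abs]; simp
  rw [h]
  exact Real.sqrt_le_sqrt
    (Finset.single_le_sum (f := fun j => ‖x j‖^2) (fun j _ => sq_nonneg _) (Finset.mem_univ i))

theorem mulabs {x y p q : ℝ} (hx : |x| ≤ p) (hy : |y| ≤ q) : |x*y| ≤ p*q := by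
  rw [abs_mul]; exact mul_le_mul hx hy (abs_nonneg _) ((abs_nonneg x).trans hx)

theorem det3_aux (a b c d' e f g h i : ℝ) (ha : |a| ≤ 1/100) (hb : |b| ≤ 1/100) (hc : |c| ≤ 1/100)
    (hd : |d'| ≤ 1/100) (he : |e| ≤ 1/100) (hf : |f| ≤ 1/100) (hg : |g| ≤ 1/100)
    (hh : |h| ≤ 1/100) (hi : |i| ≤ 1/100) :
    (1/2 : ℝ) ≤ (1+a)*((1+e)*(1+i) - f*h) - b*(d'*(1+i) - f*g) + c*(d'*h - (1+e)*g) := by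
  have H1 := mulabs ha he; have H2 := mulabs ha hi; have H3 := mulabs he hi
  have H4 := mulabs hf hh; have H5 := mulabs hb hd; have H6 := mulabs hc hg
  have H7 := mulabs (mulabs ha he) hi; have H8 := mulabs (mulabs ha hf) hh
  have H9 := mulabs (mulabs hb hd) hi; have H10 := mulabs (mulabs hb hf) hg
  have H11 := mulabs (mulabs hc hd) hh; have H12 := mulabs (mulabs hc he) hg
  rw [abs_le] at *
  nlinarith [ha.1, he.1, hi.1]

theorem det_sum_eq {d : ℕ} (hd : d = 2 ∨ d = 3) (N : Matrix (Fin d) (Fin d) ℝ) (t : ℝ) :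
    (1 + t • N).det + (1 + (-t) • N).det
      = 2 + t^2 * ((∑ i, N i i)^2 - ∑ i, ∑ j, N i j * N j i) := by
  rcases hd with rfl | rfl
  · simp [Matrix.det_fin_two, Fin.sum_univ_two, Matrix.add_apply, Matrix.smul_apply,
      Matrix.one_apply]
    ring
  · simp [Matrix.det_fin_three, Fin.sum_univ_three, Matrix.add_apply, Matrix.smul_apply,
      Matrix.one_apply]
    ring

theorem det_half_le {d : ℕ} (hd : d = 2 ∨ d = 3) (N : Matrix (Fin d) (Fin d) ℝ) (t : ℝ)
    (hN : ∀ i j, |t * N i j| ≤ 1/100) : (1/2 : ℝ) ≤ (1 + t • N).det := by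
  rcases hd with rfl | rfl
  · rw [Matrix.det_fin_two]
    simp only [Matrix.add_apply, Matrix.smul_apply, Matrix.one_apply, smul_eq_mul]
    norm_num
    have h00 := hN 0 0; have h01 := hN 0 1; have h10 := hN 1 0; have h11 := hN 1 1
    have H := mulabs h01 h10
    rw [abs_le] at *
    nlinarith
  · rw [Matrix.det_fin_three]
    simp only [Matrix.add_apply, Matrix.smul_apply, Matrix.one_apply, smul_eq_mul]
    norm_num [Fin.ext_iff]
    have := det3_aux (t * N 0 0) (t * N 0 1) (t * N 0 2) (t * N 1 0) (t * N 1 1) (t * N 1 2)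
      (t * N 2 0) (t * N 2 1) (t * N 2 2) (hN 0 0) (hN 0 1) (hN 0 2) (hN 1 0) (hN 1 1)
      (hN 1 2) (hN 2 0) (hN 2 1) (hN 2 2)
    nlinarith [this]

theorem exists_pert_homeo {E : Type*} [NormedAddCommGroup E] [NormedSpace ℝ E] [CompleteSpace E]
    (w : E → E) (K : ℝ≥0) (hw : LipschitzWith K w) (t : ℝ) (ht : |t| * K ≤ 1/2) :
    ∃ ψ : E ≃ₜ E, ∀ x, ψ x = x + t • w x := by
  set F : E → E := fun x => x + t • w x with hF
  have key : ∀ x y, ‖x - y‖ ≤ 2 * ‖F x - F y‖ := by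
    intro x y
    have h1 : ‖t • w x - t • w y‖ ≤ (1/2) * ‖x - y‖ := by
      rw [← smul_sub, norm_smul, Real.norm_eq_abs]
      calc |t| * ‖w x - w y‖ ≤ |t| * (K * ‖x - y‖) := by
            apply mul_le_mul_of_nonneg_left _ (abs_nonneg t)
            simpa [dist_eq_norm] using hw.dist_le_mul x y
        _ = (|t| * K) * ‖x - y‖ := by ring
        _ ≤ (1/2) * ‖x - y‖ := mul_le_mul_of_nonneg_right ht (norm_nonneg _)
    have h2 : ‖x - y‖ ≤ ‖F x - F y‖ + ‖t • w x - t • w y‖ := by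
      have h3 : x - y = (F x - F y) - (t • w x - t • w y) := by simp only [hF]; abel
      rw [h3]; exact norm_sub_le _ _
    linarith
  have hinj : Function.Injective F := by
    intro x y hxy
    have h4 : ‖x - y‖ ≤ 0 := by simpa [hxy] using key x y
    have h5 : x - y = 0 := by
      simpa [norm_eq_zero] using le_antisymm h4 (norm_nonneg _)
    exact sub_eq_zero.mp h5
  have hsurj : Function.Surjective F := by
    intro z
    have hgl : LipschitzWith (Real.nnabs t * K) (fun u => z - t • w u) := by
      apply LipschitzWith.of_dist_le_mul
      intro u u'
      have e1 : (z - t • w u) - (z - t • w u') = t • (w u' - w u) := by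
        rw [smul_sub]; abel
      rw [dist_eq_norm, e1, norm_smul, Real.norm_eq_abs]
      calc |t| * ‖w u' - w u‖ ≤ |t| * (K * ‖u' - u‖) := by
            apply mul_le_mul_of_nonneg_left _ (abs_nonneg t)
            simpa [dist_eq_norm] using hw.dist_le_mul u' u
        _ = (Real.nnabs t * K : ℝ≥0) * dist u u' := by
            rw [NNReal.coe_mul, Real.coe_nnabs, dist_eq_norm, norm_sub_rev]
            ring
    have hcontr : ContractingWith (Real.nnabs t * K) (fun u => z - t • w u) := by
      constructor
      · rw [← NNReal.coe_lt_coe]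
        rw [NNReal.coe_mul, Real.coe_nnabs]
        norm_num
        linarith
      · exact hgl
    obtain ⟨u, hu⟩ : ∃ u, (fun u => z - t • w u) u = u :=
      ⟨hcontr.fixedPoint _, hcontr.fixedPoint_isFixedPt⟩
    refine ⟨u, ?_⟩
    have hu' : z - t • w u = u := hu
    exact (sub_eq_iff_eq_add.mp hu').symm
  let Ψ : E ≃ E := Equiv.ofBijective F ⟨hinj, hsurj⟩
  have hcont : Continuous F := continuous_id.add ((hw.continuous).const_smul t)
  have hcont' : Continuous Ψ.symm := by
    apply (LipschitzWith.of_dist_le_mul (K := 2) (f := Ψ.symm) ?_).continuous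
    intro a b
    have ha : F (Ψ.symm a) = a := Ψ.apply_symm_apply a
    have hb : F (Ψ.symm b) = b := Ψ.apply_symm_apply b
    have := key (Ψ.symm a) (Ψ.symm b)
    rw [ha, hb] at this
    simpa [dist_eq_norm] using this
  exact ⟨⟨Ψ, hcont, hcont'⟩, fun x => rfl⟩

/-- Grisvard-type inequality: for a bounded convex domain `Ω ⊂ ℝ^d` (`d = 2, 3`) and a
(C¹) vector field `v` with vanishing normal trace on `∂Ω` (expressed via the normal cone
of the convex set), one has `‖div v‖²_{L²(Ω)} ≥ Σ_{i,j} ⟨∂_j v_i, ∂_i v_j⟩_{L²(Ω)}`. -/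
theorem grisvard_div_inequality {d : ℕ} (hd : d = 2 ∨ d = 3)
    (Ω : Set (EuclideanSpace ℝ (Fin d)))
    (hΩo : IsOpen Ω) (hΩc : Convex ℝ Ω) (hΩb : Bornology.IsBounded Ω)
    (v : EuclideanSpace ℝ (Fin d) → EuclideanSpace ℝ (Fin d))
    (hv : ContDiff ℝ 1 v)
    (hbc : ∀ x ∈ frontier Ω, ∀ nvec : EuclideanSpace ℝ (Fin d),
      (∀ y ∈ Ω, ⟪nvec, y - x⟫_ℝ ≤ 0) → ⟪v x, nvec⟫_ℝ = 0) :
    (∑ i : Fin d, ∑ j : Fin d,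
        ∫ x in Ω, (fderiv ℝ v x (EuclideanSpace.single j 1)) i *
          (fderiv ℝ v x (EuclideanSpace.single i 1)) j) ≤
      ∫ x in Ω, (∑ i : Fin d, (fderiv ℝ v x (EuclideanSpace.single i 1)) i) ^ 2 := by
  classical
  rcases Set.eq_empty_or_nonempty Ω with rfl | ⟨x₀, hx₀⟩
  · simp
  -- ambient radius
  obtain ⟨R, hR0, hRsub⟩ := hΩb.closure.subset_ball_lt 0 0
  -- cutoff
  set χ : ContDiffBump (0 : EuclideanSpace ℝ (Fin d)) :=
    ⟨R, R + 1, hR0, by linarith⟩ with hχ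
  set w : EuclideanSpace ℝ (Fin d) → EuclideanSpace ℝ (Fin d) :=
    fun x => χ x • v x with hwdef
  have hw1 : ContDiff ℝ 1 w := (χ.contDiff).smul hv
  have hwv : ∀ x ∈ Metric.closedBall (0 : EuclideanSpace ℝ (Fin d)) R, w x = v x := by
    intro x hx
    simp [hwdef, χ.one_of_mem_closedBall hx]
  have hclos : closure Ω ⊆ Metric.closedBall 0 R :=
    hRsub.trans Metric.ball_subset_closedBall
  have hsupp : HasCompactSupport w := by
    apply χ.hasCompactSupport.mono
    intro x hx
    have hx' : χ x • v x ≠ 0 := hx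
    intro hζ
    apply hx'
    rw [hζ, zero_smul]
  -- fderiv agreement on Ω
  have hfeq : ∀ x ∈ Ω, fderiv ℝ w x = fderiv ℝ v x := by
    intro x hx
    apply Filter.EventuallyEq.fderiv_eq
    have hball : Metric.ball (0 : EuclideanSpace ℝ (Fin d)) R ∈ nhds x :=
      Metric.isOpen_ball.mem_nhds (hRsub (subset_closure hx))
    filter_upwards [hball] with y hy
    exact hwv y (Metric.ball_subset_closedBall hy)
  -- Lipschitz bound for w
  have hDcont : Continuous (fderiv ℝ w) := hw1.continuous_fderiv one_ne_zero
  obtain ⟨z₀, hz₀⟩ := hDcont.norm.exists_forall_ge_of_hasCompactSupport ((hsupp.fderiv ℝ).norm)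
  set K0 : ℝ := max ‖fderiv ℝ w z₀‖ 0 with hK0def
  have hK0 : ∀ x, ‖fderiv ℝ w x‖ ≤ K0 := fun x => le_max_of_le_left (hz₀ x)
  have hK00 : (0:ℝ) ≤ K0 := le_max_right _ _
  set K : ℝ≥0 := ⟨K0, hK00⟩ with hKdef
  have hLip : LipschitzWith K w := by
    apply lipschitzWith_of_nnnorm_fderiv_le (hw1.differentiable one_ne_zero)
    intro x
    rw [← NNReal.coe_le_coe, coe_nnnorm]
    exact hK0 x
  -- entrywise matrix of the derivative
  set N : EuclideanSpace ℝ (Fin d) → Matrix (Fin d) (Fin d) ℝ :=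
    fun x => Matrix.of fun i j => (fderiv ℝ w x (EuclideanSpace.single j 1)) i with hNdef
  have hsingle : ∀ j : Fin d, ‖EuclideanSpace.single j (1:ℝ)‖ = 1 := by
    intro j
    rw [EuclideanSpace.norm_single]
    norm_num
  have hNbound : ∀ x i j, |N x i j| ≤ K0 := by
    intro x i j
    calc |N x i j| ≤ ‖fderiv ℝ w x (EuclideanSpace.single j 1)‖ := coord_abs_le_norm _ i
      _ ≤ ‖fderiv ℝ w x‖ * ‖EuclideanSpace.single j (1:ℝ)‖ :=
          (fderiv ℝ w x).le_opNorm _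
      _ = ‖fderiv ℝ w x‖ * 1 := by rw [hsingle]
      _ = ‖fderiv ℝ w x‖ := mul_one _
      _ ≤ K0 := hK0 x
  have hNcont : ∀ i j, Continuous fun x => N x i j := by
    intro i j
    have h1 : Continuous fun x => fderiv ℝ w x (EuclideanSpace.single j 1) :=
      hDcont.clm_apply continuous_const
    exact (PiLp.continuous_apply 2 _ i).comp h1
  -- choice of the time parameter
  obtain ⟨ε, hε0, hball⟩ := Metric.isOpen_iff.mp hΩo x₀ hx₀
  set t : ℝ := min (1/(100*(K0+1))) (ε/(2*(‖w x₀‖+1))) with htdef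
  have ht0 : 0 < t := by
    apply lt_min
    · positivity
    · positivity
  have htK : t * K0 ≤ 1/100 := by
    have h1 : t ≤ 1/(100*(K0+1)) := min_le_left _ _
    have h2 : t * K0 ≤ (1/(100*(K0+1))) * K0 := mul_le_mul_of_nonneg_right h1 hK00
    have h3 : (1/(100*(K0+1))) * K0 ≤ 1/100 := by
      rw [div_mul_eq_mul_div, div_le_div_iff₀ (by positivity) (by norm_num)]
      nlinarith
    linarith
  have htx₀ : t * ‖w x₀‖ < ε := by
    have h1 : t ≤ ε/(2*(‖w x₀‖+1)) := min_le_right _ _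
    have h2 : t * ‖w x₀‖ ≤ (ε/(2*(‖w x₀‖+1))) * ‖w x₀‖ :=
      mul_le_mul_of_nonneg_right h1 (norm_nonneg _)
    have h3 : (ε/(2*(‖w x₀‖+1))) * ‖w x₀‖ < ε := by
      rw [div_mul_eq_mul_div, div_lt_iff₀ (by positivity)]
      nlinarith [norm_nonneg (w x₀)]
    linarith
  -- main estimate, for either sign
  have main : ∀ s : ℝ, |s| = t → (volume Ω).toReal ≤ ∫ x in Ω, (1 + s • N x).det := by
    intro s hs
    have hsK : |s| * (K:ℝ) ≤ 1/2 := by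
      rw [hs]
      have : (K:ℝ) = K0 := rfl
      rw [this]
      linarith [htK]
    obtain ⟨ψ, hψ⟩ := exists_pert_homeo w K hLip s hsK
    -- boundary points are mapped outside Ω
    have hfront : ∀ x ∈ frontier Ω, ψ x ∉ Ω := by
      intro x hx hmem
      have hxcl : x ∈ closure Ω := frontier_subset_closure hx
      have hxne : x ∉ Ω := by
        have hx' := hx
        rw [hΩo.frontier_eq] at hx'; exact hx'.2
      obtain ⟨f, hf⟩ := geometric_hahn_banach_open_point hΩc hΩo hxne
      set n := (InnerProductSpace.toDual ℝ (EuclideanSpace ℝ (Fin d))).symm f with hndef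
      have hfn : ∀ y, ⟪n, y⟫_ℝ = f y := fun y => InnerProductSpace.toDual_symm_apply
      have hcone : ∀ y ∈ Ω, ⟪n, y - x⟫_ℝ ≤ 0 := by
        intro y hy
        rw [inner_sub_right, hfn, hfn]
        linarith [hf y hy]
      have hvx : ⟪v x, n⟫_ℝ = 0 := hbc x hx n hcone
      have hwx : w x = v x := hwv x (hclos hxcl)
      have hlt : f (ψ x) < f x := hf _ hmem
      rw [hψ x, map_add] at hlt
      have hf0 : f (v x) = 0 := by rw [← hfn, real_inner_comm]; exact hvx
      have hsmul : f (s • w x) = s * f (v x) := by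
        rw [hwx, ContinuousLinearMap.map_smul, smul_eq_mul]
      rw [hsmul, hf0, mul_zero] at hlt
      simp at hlt
    -- Ω is carried into its own image
    have himg : Ω ⊆ ψ '' Ω := by
      have hUopen : IsOpen (ψ '' Ω) := ψ.isOpen_image.mpr hΩo
      have hVopen : IsOpen (closure (ψ '' Ω))ᶜ := isClosed_closure.isOpen_compl
      have hdisj : Disjoint (ψ '' Ω) (closure (ψ '' Ω))ᶜ :=
        Set.disjoint_left.mpr fun a ha hna => hna (subset_closure ha)
      have hcover : Ω ⊆ (ψ '' Ω) ∪ (closure (ψ '' Ω))ᶜ := by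
        intro y hy
        by_cases hyc : y ∈ closure (ψ '' Ω)
        · left
          rw [closure_eq_interior_union_frontier] at hyc
          rcases hyc with h1 | h2
          · exact interior_subset h1
          · exfalso
            rw [← ψ.image_frontier] at h2
            obtain ⟨z, hz, hzeq⟩ := h2
            exact hfront z hz (hzeq ▸ hy)
        · right; exact hyc
      have hnon : (Ω ∩ ψ '' Ω).Nonempty := by
        refine ⟨ψ x₀, ?_, Set.mem_image_of_mem _ hx₀⟩
        apply hball
        rw [Metric.mem_ball, hψ x₀, dist_eq_norm]
        have he : x₀ + s • w x₀ - x₀ = s • w x₀ := by abel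
        rw [he, norm_smul, Real.norm_eq_abs, hs]
        exact htx₀
      exact (hΩc.isPreconnected).subset_left_of_subset_union hUopen hVopen hdisj hcover hnon
    have hμ : volume Ω ≤ volume (ψ '' Ω) := measure_mono himg
    -- change of variables
    set A : EuclideanSpace ℝ (Fin d) → (EuclideanSpace ℝ (Fin d) →L[ℝ] EuclideanSpace ℝ (Fin d)) :=
      fun x => ContinuousLinearMap.id ℝ _ + s • fderiv ℝ w x with hAdef
    have hψeq : ⇑ψ = fun x => x + s • w x := funext hψ
    have hders : ∀ x ∈ Ω, HasFDerivWithinAt (⇑ψ) (A x) Ω x := by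
      intro x hx
      rw [hψeq]
      exact ((hasFDerivAt_id x).add
        (((hw1.differentiable one_ne_zero x).hasFDerivAt).const_smul s)).hasFDerivWithinAt
    have hcov := lintegral_abs_det_fderiv_eq_addHaar_image volume hΩo.measurableSet hders
      (ψ.injective.injOn)
    have hdet : ∀ x, (A x).det = (1 + s • N x).det := by
      intro x
      rw [hAdef]
      rw [ContinuousLinearMap.det]
      set b := (EuclideanSpace.basisFun (Fin d) ℝ).toBasis
      rw [← LinearMap.det_toMatrix b]
      congr 1
      ext i j
      rw [LinearMap.toMatrix_apply]
      simp [Matrix.one_apply, b, EuclideanSpace.basisFun_apply, Matrix.add_apply, hNdef]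
    have hρpos : ∀ x, (1/2:ℝ) ≤ (1 + s • N x).det := by
      intro x
      apply det_half_le hd
      intro i j
      calc |s * N x i j| = t * |N x i j| := by rw [abs_mul, hs]
        _ ≤ t * K0 := mul_le_mul_of_nonneg_left (hNbound x i j) ht0.le
        _ ≤ 1/100 := htK
    have hρcont : Continuous fun x => (1 + s • N x).det := by
      apply Continuous.matrix_det
      apply continuous_matrix
      intro i j
      simp only [Matrix.add_apply, Matrix.smul_apply, smul_eq_mul]
      exact continuous_const.add (continuous_const.mul (hNcont i j))
    have h1 : (∫⁻ x in Ω, ENNReal.ofReal |(A x).det|)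
        = ∫⁻ x in Ω, ENNReal.ofReal ((1 + s • N x).det) := by
      apply lintegral_congr
      intro x
      rw [hdet x, abs_of_pos (by linarith [hρpos x])]
    have hfin : volume (ψ '' Ω) < ⊤ :=
      lt_of_le_of_lt (measure_mono (Set.image_mono subset_closure))
        ((hΩb.isCompact_closure.image ψ.continuous).measure_lt_top)
    have heqint : ∫ x in Ω, (1 + s • N x).det
        = (∫⁻ x in Ω, ENNReal.ofReal ((1 + s • N x).det)).toReal := by
      rw [integral_eq_lintegral_of_nonneg_ae]
      · exact Filter.Eventually.of_forall fun x => by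
          simp only [Pi.zero_apply]; linarith [hρpos x]
      · exact hρcont.aestronglyMeasurable.restrict
    have hle : volume Ω ≤ ∫⁻ x in Ω, ENNReal.ofReal ((1 + s • N x).det) := by
      rw [← h1, hcov]; exact hμ
    have hne : (∫⁻ x in Ω, ENNReal.ofReal ((1 + s • N x).det)) ≠ ⊤ := by
      rw [← h1, hcov]; exact hfin.ne
    calc (volume Ω).toReal
        ≤ (∫⁻ x in Ω, ENNReal.ofReal ((1 + s • N x).det)).toReal :=
          ENNReal.toReal_mono hne hle
      _ = ∫ x in Ω, (1 + s • N x).det := heqint.symm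
  -- continuity of the determinant fields and of G
  have hρc : ∀ s : ℝ, Continuous fun x => (1 + s • N x).det := by
    intro s
    apply Continuous.matrix_det
    apply continuous_matrix
    intro i j
    simp only [Matrix.add_apply, Matrix.smul_apply, smul_eq_mul]
    exact continuous_const.add (continuous_const.mul (hNcont i j))
  set G : EuclideanSpace ℝ (Fin d) → ℝ :=
    fun x => (∑ i, N x i i)^2 - ∑ i, ∑ j, N x i j * N x j i with hGdef
  have hGcont : Continuous G := by
    apply Continuous.sub
    · exact (continuous_finset_sum _ fun i _ => hNcont i i).pow 2
    · exact continuous_finset_sum _ fun i _ =>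
        continuous_finset_sum _ fun j _ => (hNcont i j).mul (hNcont j i)
  have intOn : ∀ g : EuclideanSpace ℝ (Fin d) → ℝ, Continuous g → IntegrableOn g Ω :=
    fun g hg => (hg.continuousOn.integrableOn_compact hΩb.isCompact_closure).mono_set
      subset_closure
  have hμfin : volume Ω ≠ ⊤ :=
    (lt_of_le_of_lt (measure_mono subset_closure)
      hΩb.isCompact_closure.measure_lt_top).ne
  -- combine both signs
  have h₁ := main t (abs_of_pos ht0)
  have h₂ := main (-t) (by rw [abs_neg, abs_of_pos ht0])
  have hsum : (fun x => (1 + t • N x).det + (1 + (-t) • N x).det)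
      = fun x => 2 + t^2 * G x := funext fun x => det_sum_eq hd (N x) t
  have hadd : ∫ x in Ω, ((1 + t • N x).det + (1 + (-t) • N x).det)
      = (∫ x in Ω, (1 + t • N x).det) + ∫ x in Ω, (1 + (-t) • N x).det :=
    integral_add (intOn _ (hρc t)) (intOn _ (hρc (-t)))
  have hsplit : ∫ x in Ω, (2 + t^2 * G x)
      = 2 * (volume Ω).toReal + t^2 * ∫ x in Ω, G x := by
    rw [integral_add (integrableOn_const (C := (2:ℝ)) hμfin)
      ((intOn G hGcont).const_mul (t^2)), MeasureTheory.integral_const_mul, setIntegral_const, smul_eq_mul, measureReal_def]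
    ring
  have hG0 : 0 ≤ ∫ x in Ω, G x := by
    have htot : 2 * (volume Ω).toReal ≤ 2 * (volume Ω).toReal + t^2 * ∫ x in Ω, G x := by
      rw [← hsplit, ← hsum, hadd]
      linarith
    have ht2 : 0 < t^2 := pow_pos ht0 2
    nlinarith
  -- rewrite the goal in terms of G
  have hswap : ∀ i j : Fin d,
      (∫ x in Ω, (fderiv ℝ v x (EuclideanSpace.single j 1)) i *
        (fderiv ℝ v x (EuclideanSpace.single i 1)) j)
      = ∫ x in Ω, N x i j * N x j i := by
    intro i j
    apply setIntegral_congr_fun hΩo.measurableSet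
    intro x hx
    simp only [hNdef, Matrix.of_apply, hfeq x hx]
  have hintij : ∀ i j : Fin d, IntegrableOn (fun x => N x i j * N x j i) Ω :=
    fun i j => intOn _ ((hNcont i j).mul (hNcont j i))
  have hLHS : (∑ i : Fin d, ∑ j : Fin d,
      ∫ x in Ω, (fderiv ℝ v x (EuclideanSpace.single j 1)) i *
        (fderiv ℝ v x (EuclideanSpace.single i 1)) j)
      = ∫ x in Ω, ∑ i, ∑ j, N x i j * N x j i := by
    rw [Finset.sum_congr rfl fun i _ => Finset.sum_congr rfl fun j _ => hswap i j]
    calc (∑ i : Fin d, ∑ j : Fin d, ∫ x in Ω, N x i j * N x j i)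
        = ∑ i : Fin d, ∫ x in Ω, ∑ j, N x i j * N x j i :=
          Finset.sum_congr rfl fun i _ => (integral_finset_sum _ fun j _ => hintij i j).symm
      _ = ∫ x in Ω, ∑ i, ∑ j, N x i j * N x j i :=
          (integral_finset_sum _ fun i _ => integrable_finset_sum _ fun j _ => hintij i j).symm
  have hRHS : (∫ x in Ω, (∑ i, (fderiv ℝ v x (EuclideanSpace.single i 1)) i) ^ 2)
      = ∫ x in Ω, (∑ i, N x i i) ^ 2 := by
    apply setIntegral_congr_fun hΩo.measurableSet
    intro x hx
    simp only [hNdef, Matrix.of_apply, hfeq x hx]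
  have hGint : (∫ x in Ω, G x)
      = (∫ x in Ω, (∑ i, N x i i) ^ 2) - ∫ x in Ω, ∑ i, ∑ j, N x i j * N x j i := by
    rw [hGdef]
    exact integral_sub (intOn _ ((continuous_finset_sum _ fun i _ => hNcont i i).pow 2))
      (intOn _ (continuous_finset_sum _ fun i _ =>
        continuous_finset_sum _ fun j _ => (hNcont i j).mul (hNcont j i)))
  rw [hLHS, hRHS]
  linarith [hG0, hGint]
end
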